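/- In the graph E_{n,S} described above, for each 0 ≤ i ≤ n−1 the set Mᵢ = {v_{i+1},…,vₙ} is a maximal tail, and the loop f_{i+1} based at v_{i+1} has an exit in Mᵢ if and only if i+1 ∈ S. -/
import Mathlib


section Graph

variable {V E : Type*} (s r : E → V)

/-- `v ≥ w`: either `v = w` or there is a directed path from `v` to `w`. -/
def Reach (v w : V) : Prop :=
  Relation.ReflTransGen (fun a b => ∃ e, s e = a ∧ r e = b) v w

/-- `H` is hereditary: `v ∈ H` and `v ≥ w` imply `w ∈ H`. -/
def Hereditary (H : Set V) : Prop :=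
  ∀ v ∈ H, ∀ w, Reach s r v w → w ∈ H

/-- `H` is saturated: if `v` emits at least one edge and all edges out of `v` end in `H`,
then `v ∈ H`. -/
def Saturated (H : Set V) : Prop :=
  ∀ v, (∃ e, s e = v) → (∀ e, s e = v → r e ∈ H) → v ∈ H

/-- A nonempty `M ⊆ V` is a maximal tail. -/
def MaximalTail (M : Set V) : Prop :=
  M.Nonempty ∧
  (∀ v w, Reach s r v w → w ∈ M → v ∈ M) ∧
  (∀ v ∈ M, (∃ e, s e = v) → ∃ e, s e = v ∧ r e ∈ M) ∧
  (∀ v ∈ M, ∀ w ∈ M, ∃ y ∈ M, Reach s r v y ∧ Reach s r w y)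

end Graph

/-- Edges of the graph `E_{n,S}`: an edge `e i` from `v_{i+1}` to `v_i` (0-indexed) for
each `i : Fin (n-1)`, a loop `f i` at each vertex `i : Fin n`, and an extra loop `g j`
at `j` for each `j ∈ S`. -/
abbrev GraphE.Edge (n : ℕ) (S : Set (Fin n)) : Type :=
  Fin (n - 1) ⊕ Fin n ⊕ {j : Fin n // j ∈ S}

/-- Source map of `E_{n,S}`. -/
def GraphE.src (n : ℕ) (S : Set (Fin n)) : GraphE.Edge n S → Fin n
  | .inl i => ⟨i.val + 1, by have := i.isLt; omega⟩
  | .inr (.inl i) => i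
  | .inr (.inr j) => j.1

/-- Range map of `E_{n,S}`. -/
def GraphE.rng (n : ℕ) (S : Set (Fin n)) : GraphE.Edge n S → Fin n
  | .inl i => ⟨i.val, by have := i.isLt; omega⟩
  | .inr (.inl i) => i
  | .inr (.inr j) => j.1

lemma GraphE.rng_le_src (n : ℕ) (S : Set (Fin n)) (e : GraphE.Edge n S) :
    GraphE.rng n S e ≤ GraphE.src n S e := by
  rcases e with e | e | e <;> simp [GraphE.src, GraphE.rng, Fin.le_def]

lemma GraphE.reach_of_le {n : ℕ} (S : Set (Fin n)) (v w : Fin n) (h : w ≤ v) :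
    Reach (GraphE.src n S) (GraphE.rng n S) v w := by
  obtain ⟨k, hk⟩ : ∃ k, v.val = w.val + k := ⟨v.val - w.val, by omega⟩
  induction k generalizing v with
  | zero => have : v = w := Fin.ext (by omega); subst this; exact .refl
  | succ k ih =>
    have hn : v.val - 1 < n - 1 := by have := v.isLt; omega
    have step : Reach (GraphE.src n S) (GraphE.rng n S) v ⟨v.val - 1, by omega⟩ :=
      Relation.ReflTransGen.single
        ⟨Sum.inl ⟨v.val - 1, hn⟩, Fin.ext (by simp [GraphE.src]; omega), rfl⟩
    exact step.trans (ih ⟨v.val - 1, by omega⟩ (by simp [Fin.le_def]; omega) (by simp; omega))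

/-- In the graph `E_{n,S}` (0-indexed as above, so the vertex `v_{i+1}` of the paper is
`i : Fin n` and `i ∈ S` means there is a second loop at that vertex), for each `i` the
set `Mᵢ = {v_{i+1}, …, vₙ} = {v : i ≤ v}` is a maximal tail, and the loop `f_{i+1}`
based at `v_{i+1}` has an exit in `Mᵢ` if and only if `i ∈ S`. -/
theorem maximalTails_of_GraphE (n : ℕ) (S : Set (Fin n)) (i : Fin n) :
    MaximalTail (GraphE.src n S) (GraphE.rng n S) {v : Fin n | i ≤ v} ∧
    ((∃ g : GraphE.Edge n S, g ≠ Sum.inr (Sum.inl i) ∧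
        GraphE.src n S g = i ∧ GraphE.rng n S g ∈ {v : Fin n | i ≤ v}) ↔ i ∈ S) := by
  constructor
  · refine ⟨⟨i, le_refl i⟩, ?_, ?_, ?_⟩
    · have key : ∀ v w : Fin n, Reach (GraphE.src n S) (GraphE.rng n S) v w → w ≤ v := by
        intro v w hr
        induction hr with
        | refl => exact le_refl v
        | tail _ h ih =>
          obtain ⟨e, he, hre⟩ := h
          exact (hre ▸ he ▸ GraphE.rng_le_src n S e).trans ih
      intro v w hr hw
      exact le_trans hw (key v w hr)
    · intro v hv _
      exact ⟨Sum.inr (Sum.inl v), rfl, hv⟩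
    · intro v hv w hw
      exact ⟨i, le_refl i, GraphE.reach_of_le S v i hv, GraphE.reach_of_le S w i hw⟩
  · constructor
    · rintro ⟨g, hne, hs, hr⟩
      rcases g with e | e | e
      · simp only [GraphE.src, GraphE.rng, Set.mem_setOf_eq, Fin.le_def] at hs hr
        have : e.val + 1 = i.val := congrArg Fin.val hs
        omega
      · simp only [GraphE.src] at hs; subst hs; simp at hne
      · simp only [GraphE.src] at hs; exact hs ▸ e.2
    · intro hi
      exact ⟨Sum.inr (Sum.inr ⟨i, hi⟩), by simp, rfl, le_refl i⟩
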